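/- Let f : A → A be a continuous map of degree d with |d| > 1, let p and q be fixed points of f, and let γ be a path in A from p to q. If for some integer k ≥ 1 the paths γ and fᵏ ∘ γ are homotopic with fixed endpoints, then γ and f ∘ γ are homotopic with fixed endpoints. -/

import Mathlib

open Set Filter Topology

noncomputable section

/-- The open annulus `A = S¹ × (0,1)`. -/
abbrev Ann : Type := Circle × (Set.Ioo (0:ℝ) 1)

/-- The universal cover `Ã = ℝ × (0,1)`. -/
abbrev AnnTil : Type := ℝ × (Set.Ioo (0:ℝ) 1)

/-- The covering projection `π(x,y) = (exp(2πix), y)`. -/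
def pr : AnnTil → Ann := fun z => (Circle.exp (2 * Real.pi * z.1), z.2)

/-- Translation by an integer in the first coordinate: `z + k`. -/
def tr (z : AnnTil) (k : ℤ) : AnnTil := (z.1 + k, z.2)

/-- `F` is a lift of `f`. -/
def IsLift (f : Ann → Ann) (F : AnnTil → AnnTil) : Prop :=
  Continuous F ∧ pr ∘ F = f ∘ pr

/-- `f` has degree `d`: some lift satisfies `F(z+1) = F(z) + d`. -/
def HasDegree (f : Ann → Ann) (d : ℤ) : Prop :=
  ∃ F : AnnTil → AnnTil, IsLift f F ∧ ∀ z, F (tr z 1) = tr (F z) d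

/-- A subset of the annulus is essential if it is not contained in any
connected, simply connected open subset. -/
def IsEssential (K : Set Ann) : Prop :=
  ¬ ∃ U : Set Ann, IsOpen U ∧ IsConnected U ∧ SimplyConnectedSpace U ∧ K ⊆ U

/-- Nielsen equivalence of fixed points `p`, `q` of `g`: there is a path `γ`
from `p` to `q` homotopic (rel endpoints) to `g ∘ γ`. -/
def NielsenEquiv (g : Ann → Ann) (p q : Ann) : Prop :=
  ∃ (hg : Continuous g) (hp : g p = p) (hq : g q = q) (γ : Path p q),
    γ.Homotopic ((γ.map hg).cast hp.symm hq.symm)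

/-- `g` has exactly `N` Nielsen classes of fixed points. -/
def HasExactlyNielsenClasses (g : Ann → Ann) (N : ℕ) : Prop :=
  ∃ S : Finset Ann, S.card = N ∧ (∀ p ∈ S, g p = p) ∧
    (∀ p ∈ S, ∀ q ∈ S, p ≠ q → ¬ NielsenEquiv g p q) ∧
    (∀ p, g p = p → ∃ q ∈ S, NielsenEquiv g p q)

/-- `Fill K`: the union of `K` with the connected components of its
complement whose closure is compact. -/
def Fill (K : Set Ann) : Set Ann :=
  K ∪ {x | x ∈ Kᶜ ∧ IsCompact (closure (connectedComponentIn Kᶜ x))}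

/-!
Lift `γ` to a path `Γ` in `Ã` and let `F` be a lift of `f` of degree `d`. Since `Ã` is simply
connected, `γ` is homotopic to `g ∘ γ` (for any `g` fixing `p` and `q`, with lift `G`) exactly when
`G` moves `Γ 0` and `Γ 1` by the same deck translation. `F` moves them by some `a` and `b`, so
`Fᵏ` moves them by `a S` and `b S` with `S = 1 + d + ⋯ + dᵏ⁻¹`, which is nonzero because `|d| > 1`.
Hence `γ ∼ fᵏ ∘ γ` forces `a = b`, which is the criterion for `γ ∼ f ∘ γ`.
-/

open unitInterval

section CoveringHomotopy

variable {E X Y : Type*} [TopologicalSpace E] [TopologicalSpace X] [TopologicalSpace Y]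

theorem ContinuousMap.homotopicRel_zero_one_iff [SimplyConnectedSpace E] {Γ₀ Γ₁ : C(I, E)}
    (h₀ : Γ₀ 0 = Γ₁ 0) : Γ₀.HomotopicRel Γ₁ {0, 1} ↔ Γ₀ 1 = Γ₁ 1 := by
  refine ⟨fun ⟨H⟩ => ?_, fun h₁ => ?_⟩
  · rw [← H.eq_fst 0 (.inr rfl), H.eq_snd 0 (.inr rfl)]
  · exact SimplyConnectedSpace.paths_homotopic
      (⟨Γ₀, rfl, rfl⟩ : Path (Γ₀ 0) (Γ₀ 1)) ⟨Γ₁, h₀.symm, h₁.symm⟩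

theorem IsCoveringMap.homotopicRel_iff_lift_apply_one_eq [SimplyConnectedSpace E] {p : E → X}
    (cov : IsCoveringMap p) {γ₀ γ₁ : C(I, X)} {Γ₀ Γ₁ : C(I, E)} (hΓ₀ : ∀ t, p (Γ₀ t) = γ₀ t)
    (hΓ₁ : ∀ t, p (Γ₁ t) = γ₁ t) (h₀ : Γ₀ 0 = Γ₁ 0) :
    γ₀.HomotopicRel γ₁ {0, 1} ↔ Γ₀ 1 = Γ₁ 1 := by
  obtain rfl : ContinuousMap.comp ⟨p, cov.continuous⟩ Γ₀ = γ₀ := ContinuousMap.ext hΓ₀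
  obtain rfl : ContinuousMap.comp ⟨p, cov.continuous⟩ Γ₁ = γ₁ := ContinuousMap.ext hΓ₁
  rw [← cov.homotopicRel_iff_comp ⟨0, .inl rfl, h₀⟩, ContinuousMap.homotopicRel_zero_one_iff h₀]

theorem Path.homotopic_iff_homotopic_map_fst [SimplyConnectedSpace Y] {x y : X × Y}
    {γ₀ γ₁ : Path x y} :
    γ₀.Homotopic γ₁ ↔ (γ₀.map continuous_fst).Homotopic (γ₁.map continuous_fst) := by
  refine ⟨fun h => h.map ⟨Prod.fst, continuous_fst⟩, fun h => ?_⟩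
  exact Nonempty.map2 Path.Homotopic.prodHomotopy h
    (SimplyConnectedSpace.paths_homotopic (γ₀.map continuous_snd) (γ₁.map continuous_snd))

end CoveringHomotopy

instance : ContractibleSpace (Ioo (0 : ℝ) 1) :=
  (convex_Ioo (0 : ℝ) 1).contractibleSpace ⟨1 / 2, by norm_num⟩

theorem isCoveringMap_circleExp_two_pi_mul :
    IsCoveringMap fun x : ℝ => Circle.exp (2 * Real.pi * x) :=
  Circle.isCoveringMap_exp.comp_homeomorph (Homeomorph.mulLeft₀ _ Real.two_pi_pos.ne')

theorem continuous_tr (n : ℤ) : Continuous fun z : AnnTil => tr z n := by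
  unfold tr; fun_prop

@[simp]
theorem tr_zero (z : AnnTil) : tr z 0 = z := by
  simp [tr]

@[simp]
theorem tr_tr (z : AnnTil) (m n : ℤ) : tr (tr z m) n = tr z (m + n) := by
  simp [tr, add_assoc]

theorem tr_eq_self_iff {z : AnnTil} {n : ℤ} : tr z n = z ↔ n = 0 := by
  simp [tr, Prod.ext_iff]

@[simp]
theorem pr_tr (z : AnnTil) (n : ℤ) : pr (tr z n) = pr z := by
  simp [pr, tr, mul_add, Circle.exp_add, Circle.exp_two_pi_mul_int]

theorem exists_eq_tr_of_pr_eq {z w : AnnTil} (h : pr z = pr w) : ∃ n : ℤ, z = tr w n := by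
  obtain ⟨h₁, h₂⟩ := Prod.ext_iff.mp h
  obtain ⟨n, hn⟩ := Circle.exp_eq_exp.mp h₁
  refine ⟨n, Prod.ext ?_ h₂⟩
  have := Real.pi_pos
  simp only [tr]
  nlinarith

theorem exists_pr_lift {x y : Ann} (γ : Path x y) : ∃ Γ : C(I, AnnTil), ∀ t, pr (Γ t) = γ t := by
  obtain ⟨θ, hθ⟩ := Circle.exp_surjective x.1
  obtain ⟨L, hL, -⟩ := isCoveringMap_circleExp_two_pi_mul.exists_path_lifts
    (γ.map continuous_fst).toContinuousMap (θ / (2 * Real.pi))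
    (by simp [mul_div_cancel₀ _ Real.two_pi_pos.ne', hθ])
  exact ⟨⟨fun t => (L t, (γ t).2), by fun_prop⟩, fun t => Prod.ext (congrFun hL t) rfl⟩

theorem Path.homotopic_iff_pr_lift_apply_one_eq {x y : Ann} {γ₀ γ₁ : Path x y}
    {Γ₀ Γ₁ : C(I, AnnTil)} (hΓ₀ : ∀ t, pr (Γ₀ t) = γ₀ t) (hΓ₁ : ∀ t, pr (Γ₁ t) = γ₁ t)
    (h₀ : Γ₀ 0 = Γ₁ 0) : γ₀.Homotopic γ₁ ↔ Γ₀ 1 = Γ₁ 1 := by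
  have h₁ : (Γ₀ 1).2 = (Γ₁ 1).2 :=
    calc (Γ₀ 1).2 = (γ₀ 1).2 := congrArg Prod.snd (hΓ₀ 1)
      _ = (γ₁ 1).2 := by simp
      _ = (Γ₁ 1).2 := (congrArg Prod.snd (hΓ₁ 1)).symm
  rw [Path.homotopic_iff_homotopic_map_fst, Prod.ext_iff, and_iff_left h₁]
  exact isCoveringMap_circleExp_two_pi_mul.homotopicRel_iff_lift_apply_one_eq
    (Γ₀ := ContinuousMap.fst.comp Γ₀) (Γ₁ := ContinuousMap.fst.comp Γ₁)
    (fun t => congrArg Prod.fst (hΓ₀ t)) (fun t => congrArg Prod.fst (hΓ₁ t))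
    (congrArg Prod.fst h₀)

section DegreeLifts

variable {f g : Ann → Ann} {F G : AnnTil → AnnTil}

theorem IsLift.iterate (hF : IsLift f F) (n : ℕ) : IsLift f^[n] F^[n] :=
  ⟨hF.1.iterate n, funext <| Function.Semiconj.iterate_right (fun z => congrFun hF.2 z) n⟩

theorem IsLift.exists_eq_tr_of_apply_pr_eq (hF : IsLift f F) {z : AnnTil}
    (hz : f (pr z) = pr z) : ∃ n : ℤ, F z = tr z n :=
  exists_eq_tr_of_pr_eq ((congrFun hF.2 z).trans hz)

theorem apply_tr_of_apply_tr_one {d : ℤ} (hFd : ∀ z, F (tr z 1) = tr (F z) d) (z : AnnTil)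
    (n : ℤ) : F (tr z n) = tr (F z) (n * d) := by
  induction n using Int.induction_on with
  | zero => simp
  | succ n ih => rw [← tr_tr, hFd, ih, tr_tr, add_one_mul]
  | pred n ih =>
    have h := hFd (tr z (-n - 1))
    rw [tr_tr, sub_add_cancel, ih] at h
    calc F (tr z (-n - 1)) = tr (tr (F (tr z (-n - 1))) d) (-d) := by simp
      _ = tr (F z) ((-n - 1) * d) := by rw [← h, tr_tr]; ring_nf

theorem iterate_eq_tr_mul_geom_sum {d a : ℤ} (hFd : ∀ z, F (tr z 1) = tr (F z) d)
    {z : AnnTil} (ha : F z = tr z a) (n : ℕ) :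
    F^[n] z = tr z (a * ∑ i ∈ Finset.range n, d ^ i) := by
  induction n with
  | zero => simp
  | succ n ih =>
    rw [Function.iterate_succ_apply', ih, apply_tr_of_apply_tr_one hFd, ha, tr_tr, geom_sum_succ]
    ring_nf

theorem homotopic_map_iff_of_isLift (hg : Continuous g) (hG : IsLift g G) {x y : Ann}
    (hx : g x = x) (hy : g y = y) (γ : Path x y) {Γ : C(I, AnnTil)} (hΓ : ∀ t, pr (Γ t) = γ t)
    {m n : ℤ} (hm : G (Γ 0) = tr (Γ 0) m) (hn : G (Γ 1) = tr (Γ 1) n) :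
    γ.Homotopic ((γ.map hg).cast hx.symm hy.symm) ↔ m = n := by
  let Λ : C(I, AnnTil) := ⟨fun t => tr (G (Γ t)) (-m), (continuous_tr _).comp (hG.1.comp Γ.2)⟩
  have hΛ (t : I) : pr (Λ t) = g (γ t) := by
    simp only [Λ, ContinuousMap.coe_mk, pr_tr, ← hΓ t]
    exact congrFun hG.2 (Γ t)
  rw [Path.homotopic_iff_pr_lift_apply_one_eq hΓ hΛ (by simp [Λ, hm]), eq_comm]
  simp only [Λ, ContinuousMap.coe_mk, hn, tr_tr, tr_eq_self_iff]
  omega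

end DegreeLifts

/-- If `γ ∼ fᵏ ∘ γ` (rel endpoints) for some `k ≥ 1`, then `γ ∼ f ∘ γ`. -/
theorem stmt_4 (f : Ann → Ann) (hf : Continuous f) (d : ℤ)
    (hdeg : HasDegree f d) (hd : 1 < |d|)
    (p q : Ann) (hp : f p = p) (hq : f q = q) (γ : Path p q)
    (k : ℕ) (hk : 1 ≤ k)
    (hhom : γ.Homotopic ((γ.map (hf.iterate k)).cast
      (Function.iterate_fixed hp k).symm (Function.iterate_fixed hq k).symm)) :
    γ.Homotopic ((γ.map hf).cast hp.symm hq.symm) := by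
  obtain ⟨F, hF, hFd⟩ := hdeg
  obtain ⟨Γ, hΓ⟩ := exists_pr_lift γ
  obtain ⟨a, ha⟩ := hF.exists_eq_tr_of_apply_pr_eq (by rw [hΓ, γ.source, hp])
  obtain ⟨b, hb⟩ := hF.exists_eq_tr_of_apply_pr_eq (by rw [hΓ, γ.target, hq])
  have hab := (homotopic_map_iff_of_isLift (hf.iterate k) (hF.iterate k)
    (Function.iterate_fixed hp k) (Function.iterate_fixed hq k) γ hΓ
    (iterate_eq_tr_mul_geom_sum hFd ha k) (iterate_eq_tr_mul_geom_sum hFd hb k)).mp hhom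
  have hd_ne : d ≠ -1 := by rintro rfl; simp at hd
  refine (homotopic_map_iff_of_isLift hf hF hp hq γ hΓ ha hb).mpr ?_
  exact mul_right_cancel₀ (geom_sum_ne_zero hd_ne (by omega)) hab
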